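/- arXiv:2312.09485 — 3 statements merged into one kernel-verified Lean document; each statement's English description precedes it below -/
import Mathlib

section
/- Define the degenerate Stirling numbers of the second kind by S_λ(n,k) = (1/k!) Σ_{j=0}^{k} (-1)^{k-j} C(k,j) (j)_{n,λ}. Then for every natural number n and every x (as a polynomial identity over ℚ[λ], or for all real x), one has (x)_{n,λ} = Σ_{k=0}^{n} S_λ(n,k) (x)_k, where (x)_k = x(x-1)⋯(x-k+1) is the ordinary falling factorial. -/
/-!
As a function of `x`, `(x)_{n,λ}` is a polynomial of degree `n`, so Newton's forward-difference
formula expands it in the falling-factorial basis with coefficients `Δᵏ(·)_{n,λ}(0) / k!`, and the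
`k`-th forward difference at `0` is exactly the alternating binomial sum defining `k! S_λ(n,k)`.
Newton's formula holds at the natural numbers by the Gregory–Newton formula, hence everywhere,
both sides being polynomials.
-/

/-- The degenerate falling factorial `(x)_{n,λ} = x(x-λ)⋯(x-(n-1)λ)`, with `(x)_{0,λ} = 1`. -/
def degFall (x lam : ℝ) (n : ℕ) : ℝ :=
  ∏ i ∈ Finset.range n, (x - (i : ℝ) * lam)

/-- The ordinary falling factorial `(x)_k = x(x-1)⋯(x-k+1)`, with `(x)_0 = 1`. -/
def fallFact (x : ℝ) (k : ℕ) : ℝ :=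
  ∏ i ∈ Finset.range k, (x - (i : ℝ))

/-- The degenerate Stirling numbers of the second kind
`S_λ(n,k) = (1/k!) Σ_{j=0}^k (-1)^{k-j} C(k,j) (j)_{n,λ}`. -/
noncomputable def degStirling (lam : ℝ) (n k : ℕ) : ℝ :=
  (1 / (k.factorial : ℝ)) *
    ∑ j ∈ Finset.range (k + 1), (-1 : ℝ) ^ (k - j) * (k.choose j : ℝ) * degFall (j : ℝ) lam n

open Finset Polynomial fwdDiff
open scoped Nat

-- Gregory–Newton, with the sum over `k ≤ m` cut at `k ≤ n`: differences beyond the degree vanish.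
theorem Polynomial.eval_natCast_eq_sum_choose_smul_fwdDiff_iter {R : Type*} [CommRing R]
    {P : R[X]} {n : ℕ} (hP : P.natDegree ≤ n) (m : ℕ) :
    P.eval (m : R) = ∑ k ∈ range (n + 1), m.choose k • (Δ_[1])^[k] P.eval 0 := by
  calc P.eval (m : R) = ∑ k ∈ range (m + 1), m.choose k • (Δ_[1])^[k] P.eval 0 := by
        simpa using shift_eq_sum_fwdDiff_iter 1 P.eval m 0
    _ = ∑ k ∈ range (m + n + 1), m.choose k • (Δ_[1])^[k] P.eval 0 :=
        sum_subset (range_subset_range.2 (by omega)) fun k _ hk => by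
          rw [Nat.choose_eq_zero_of_lt (by simpa using hk), zero_smul]
    _ = ∑ k ∈ range (n + 1), m.choose k • (Δ_[1])^[k] P.eval 0 :=
        (sum_subset (range_subset_range.2 (by omega)) fun k _ hk => by
          rw [fwdDiff_iter_eq_zero_of_degree_lt (by simp at hk; omega), Pi.zero_apply,
            smul_zero]).symm

theorem Polynomial.eval_eq_sum_fwdDiff_iter_div_factorial_mul_descPochhammer {K : Type*} [Field K]
    [CharZero K] {P : K[X]} {n : ℕ} (hP : P.natDegree ≤ n) (x : K) :
    P.eval x = ∑ k ∈ range (n + 1), (Δ_[1])^[k] P.eval 0 / k ! * (descPochhammer K k).eval x := by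
  set Q : K[X] := ∑ k ∈ range (n + 1), C ((Δ_[1])^[k] P.eval 0 / k !) * descPochhammer K k
  have hPQ : P = Q := by
    refine eq_of_infinite_eval_eq P Q
      ((Set.infinite_range_of_injective Nat.cast_injective).mono ?_)
    rintro _ ⟨m, rfl⟩
    simp only [Set.mem_ofPred_eq, Q, eval_finsetSum, eval_mul, eval_C,
      descPochhammer_eval_eq_descFactorial, Nat.descFactorial_eq_factorial_mul_choose,
      eval_natCast_eq_sum_choose_smul_fwdDiff_iter hP m]
    refine sum_congr rfl fun k _ => ?_
    have hk : (k ! : K) ≠ 0 := Nat.cast_ne_zero.2 k.factorial_ne_zero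
    rw [nsmul_eq_mul, Nat.cast_mul]
    field_simp
  simpa [Q, eval_finsetSum] using congrArg (eval x) hPQ

noncomputable def degFallPoly (lam : ℝ) (n : ℕ) : ℝ[X] :=
  ∏ i ∈ range n, (X - C ((i : ℝ) * lam))

theorem eval_degFallPoly (lam x : ℝ) (n : ℕ) : (degFallPoly lam n).eval x = degFall x lam n := by
  simp [degFallPoly, degFall, eval_prod]

theorem natDegree_degFallPoly (lam : ℝ) (n : ℕ) : (degFallPoly lam n).natDegree = n := by
  rw [degFallPoly, natDegree_finsetProd_X_sub_C_eq_card, card_range]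

theorem fwdDiff_iter_degFall_zero (lam : ℝ) (n k : ℕ) :
    (Δ_[1])^[k] (fun x => degFall x lam n) 0 = k ! * degStirling lam n k := by
  rw [fwdDiff_iter_eq_sum_shift, degStirling, ← mul_assoc, mul_one_div_cancel (by positivity),
    one_mul]
  simp [zsmul_eq_mul]

theorem fallFact_eq_descPochhammer_eval (x : ℝ) (k : ℕ) :
    fallFact x k = (descPochhammer ℝ k).eval x :=
  (descPochhammer_eval_eq_prod_range k x).symm

/-- `(x)_{n,λ} = Σ_{k=0}^n S_λ(n,k) (x)_k` for all real `x`. -/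
theorem degFall_eq_sum_degStirling_fallFact (lam : ℝ) (n : ℕ) (x : ℝ) :
    degFall x lam n = ∑ k ∈ Finset.range (n + 1), degStirling lam n k * fallFact x k := by
  have hnewton := eval_eq_sum_fwdDiff_iter_div_factorial_mul_descPochhammer
    (natDegree_degFallPoly lam n).le x
  simp only [eval_degFallPoly, fwdDiff_iter_degFall_zero] at hnewton
  rw [hnewton]
  refine sum_congr rfl fun k _ => ?_
  rw [fallFact_eq_descPochhammer_eval, mul_div_cancel_left₀ _ (by positivity)]
end

section
/- Let m be a positive integer, r a nonnegative integer, and λ a real parameter. Define the degenerate r-Whitney numbers of the second kind by W^{(r)}_{m,λ}(n,k) = (1/(m^k k!)) Σ_{j=0}^{k} C(k,j) (-1)^{k-j} (mj+r)_{n,λ}. Then for all n ≥ 0 and all x, (mx+r)_{n,λ} = Σ_{k=0}^{n} W^{(r)}_{m,λ}(n,k) m^k (x)_k as a polynomial identity in x. -/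
/-- The degenerate r-Whitney numbers of the second kind
`W^{(r)}_{m,λ}(n,k) = (1/(mᵏ k!)) Σ_{j=0}^k C(k,j) (-1)^{k-j} (mj+r)_{n,λ}`. -/
noncomputable def degRWhitney (m r : ℕ) (lam : ℝ) (n k : ℕ) : ℝ :=
  (1 / ((m : ℝ) ^ k * (k.factorial : ℝ))) *
    ∑ j ∈ Finset.range (k + 1),
      (k.choose j : ℝ) * (-1 : ℝ) ^ (k - j) * degFall ((m : ℝ) * (j : ℝ) + (r : ℝ)) lam n

/-! Both sides are polynomials of degree at most `n` in `x`. By its definition, `W(n,k) mᵏ k!` is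
the `k`-th forward difference at `0` of `j ↦ (mj+r)_{n,λ}`, so the right-hand side is the Newton
forward-difference interpolant of the left-hand side; by the Gregory–Newton formula the two agree
at `x = 0, 1, …, n`, hence everywhere. -/

open Finset Polynomial Nat

theorem shift_eq_sum_range_fwdDiff_iter {M G : Type*} [AddCommMonoid M] [AddCommGroup G]
    (h : M) (f : M → G) (y : M) {N n : ℕ} (hN : N ≤ n) :
    f (y + N • h) = ∑ k ∈ range (n + 1), N.choose k • (fwdDiff h)^[k] f y := by
  rw [shift_eq_sum_fwdDiff_iter h f N y]
  refine sum_subset (range_subset_range.2 (by omega)) fun k _ hk => ?_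
  rw [Nat.choose_eq_zero_of_lt (by simpa using hk), zero_smul]

theorem Polynomial.eval_eq_sum_range_fwdDiff_iter_mul_descPochhammer {K : Type*} [Field K]
    [CharZero K] {P : K[X]} {n : ℕ} (hP : P.natDegree ≤ n) (x : K) :
    P.eval x =
      ∑ k ∈ range (n + 1), (fwdDiff 1)^[k] P.eval 0 / k ! * (descPochhammer K k).eval x := by
  set Q : K[X] := ∑ k ∈ range (n + 1), C ((fwdDiff 1)^[k] P.eval 0 / k !) * descPochhammer K k
  have hQ : Q.natDegree ≤ n := by
    refine natDegree_sum_le_of_forall_le _ _ fun k hk => ?_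
    refine (natDegree_C_mul_le _ _).trans ?_
    rw [descPochhammer_natDegree]
    exact Nat.lt_succ_iff.1 (mem_range.1 hk)
  have hPQ : P = Q := by
    refine eq_of_natDegree_lt_card_of_eval_eq P Q (f := fun N : Fin (n + 1) => (N : K))
      (Nat.cast_injective.comp Fin.val_injective) (fun N => ?_) ?_
    · have newton := shift_eq_sum_range_fwdDiff_iter (1 : K) P.eval 0 (Nat.lt_succ_iff.1 N.isLt)
      rw [zero_add, nsmul_one] at newton
      rw [newton, eval_finsetSum]
      refine sum_congr rfl fun k _ => ?_
      rw [eval_mul, eval_C, nsmul_eq_mul, Nat.cast_choose_eq_descPochhammer_div]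
      ring
    · rw [Fintype.card_fin]
      exact Nat.lt_succ_iff.2 (max_le hP hQ)
  rw [congrArg (eval x) hPQ, eval_finsetSum]
  simp only [eval_mul, eval_C]

theorem natDegree_prod_linear_le {ι R : Type*} [CommSemiring R] (s : Finset ι) (a : R)
    (b : ι → R) : (∏ i ∈ s, (C a * X + C (b i))).natDegree ≤ #s :=
  (natDegree_prod_le _ _).trans <| (sum_le_card_nsmul _ _ 1 fun _ _ => natDegree_linear_le).trans
    (by simp)

theorem degFall_affine_eq_eval (a b lam x : ℝ) (n : ℕ) :
    degFall (a * x + b) lam n = (∏ i ∈ range n, (C a * X + C (b - i * lam))).eval x := by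
  rw [degFall, eval_prod]
  exact prod_congr rfl fun i _ => by simp only [eval_add, eval_mul, eval_C, eval_X]; ring

theorem degRWhitney_mul_pow_eq_fwdDiff_iter_div_factorial (m r : ℕ) (hm : m ≠ 0) (lam : ℝ)
    (n k : ℕ) :
    degRWhitney m r lam n k * (m : ℝ) ^ k =
      (fwdDiff 1)^[k] (fun x : ℝ => degFall (m * x + r) lam n) 0 / k ! := by
  rw [fwdDiff_iter_eq_sum_shift, degRWhitney]
  have : (m : ℝ) ^ k ≠ 0 := pow_ne_zero _ (Nat.cast_ne_zero.2 hm)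
  field_simp
  refine sum_congr rfl fun j _ => ?_
  simp only [zsmul_eq_mul, zero_add, nsmul_one]
  push_cast
  ring

/-- `(mx+r)_{n,λ} = Σ_{k=0}^n W^{(r)}_{m,λ}(n,k) mᵏ (x)_k` for all real `x`. -/
theorem degFall_eq_sum_degRWhitney (m : ℕ) (hm : 0 < m) (r : ℕ) (lam : ℝ) (n : ℕ) (x : ℝ) :
    degFall ((m : ℝ) * x + (r : ℝ)) lam n =
      ∑ k ∈ Finset.range (n + 1), degRWhitney m r lam n k * (m : ℝ) ^ k * fallFact x k := by
  set P : ℝ[X] := ∏ i ∈ range n, (C (m : ℝ) * X + C (r - i * lam))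
  have hP : P.natDegree ≤ n := card_range n ▸ natDegree_prod_linear_le _ _ _
  have hPeval : P.eval = fun y => degFall (m * y + r) lam n :=
    funext fun y => (degFall_affine_eq_eval _ _ _ _ _).symm
  rw [degFall_affine_eq_eval, eval_eq_sum_range_fwdDiff_iter_mul_descPochhammer hP, hPeval]
  refine sum_congr rfl fun k _ => ?_
  rw [degRWhitney_mul_pow_eq_fwdDiff_iter_div_factorial m r hm.ne' lam n k,
    descPochhammer_eval_eq_prod_range, fallFact]
end

section
/- Recurrence for degenerate Dowling polynomials (Theorem 2.8 with Y = 1): with D_{m,λ}(n,x) = Σ_{k=0}^{n} W_{m,λ}(n,k) x^k and W_{m,λ}(n,k) = (1/(m^k k!)) Σ_{j=0}^{k} C(k,j)(-1)^{k-j}(mj+1)_{n,λ}, for every n ≥ 0: D_{m,λ}(n+1,x) = Σ_{k=0}^{n} (-1)^{n-k} λ^{n-k} (n!/k!) D_{m,λ}(k,x) + (x/m) Σ_{k=0}^{n} C(n,k) D_{m,λ}(k,x) (m)_{n-k+1,λ}. -/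
/-- The degenerate Whitney numbers of the second kind. -/
noncomputable def degWhitney (m : ℕ) (lam : ℝ) (n k : ℕ) : ℝ :=
  (1 / ((m : ℝ) ^ k * (k.factorial : ℝ))) *
    ∑ j ∈ Finset.range (k + 1),
      (k.choose j : ℝ) * (-1 : ℝ) ^ (k - j) * degFall ((m : ℝ) * (j : ℝ) + 1) lam n

/-- The degenerate Dowling polynomials `D_{m,λ}(n,x) = Σ_{k=0}^n W_{m,λ}(n,k) xᵏ`. -/
noncomputable def degDowling (m : ℕ) (lam : ℝ) (n : ℕ) (x : ℝ) : ℝ :=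
  ∑ k ∈ Finset.range (n + 1), degWhitney m lam n k * x ^ k

/-!
Clearing the factor `m ^ k k!`, the Whitney numbers satisfy the triangular recurrence
`W(n+1,k+1) = (1 - nλ) W(n,k+1) + Σ_l C(n,l) W(l,k) (m)_{n-l,λ}`: split
`(mj+1)_{n+1,λ} = (1 - nλ) (mj+1)_{n,λ} + mj (mj+1)_{n,λ}`, absorb the factor `j` into the
forward difference, and expand `(mj+m+1)_{n,λ}` by the degenerate Vandermonde identity. The same
recurrence shows `W(n,k) = 0` for `k > n`. Summed against `x ^ k` it gives
`D(n+1) = (1 - nλ) D(n) + x Σ_l C(n,l) D(l) (m)_{n-l,λ}`, and the stated recurrence follows from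
this by induction on `n`, using `(m)_{j+1,λ} = (m - jλ) (m)_{j,λ}` and
`(n+1-k) C(n+1,k) = (n+1) C(n,k)`.
-/

open Finset

lemma degFall_zero (x lam : ℝ) : degFall x lam 0 = 1 := prod_range_zero _

lemma degFall_succ (x lam : ℝ) (n : ℕ) :
    degFall x lam (n + 1) = degFall x lam n * (x - n * lam) :=
  prod_range_succ _ _

theorem degFall_add (x y lam : ℝ) (n : ℕ) :
    degFall (x + y) lam n =
      ∑ l ∈ range (n + 1), (n.choose l : ℝ) * degFall x lam l * degFall y lam (n - l) := by
  induction n with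
  | zero => simp [degFall_zero]
  | succ n ih =>
    have pascal := sum_choose_succ_mul (fun i j => degFall x lam i * degFall y lam j) n
    simp only [← mul_assoc] at pascal
    rw [degFall_succ, ih, sum_mul, pascal, ← sum_add_distrib]
    refine sum_congr rfl fun i hi => ?_
    have hi : i ≤ n := mem_range_succ_iff.mp hi
    rw [Nat.sub_add_comm hi, degFall_succ, degFall_succ, Nat.cast_sub hi]
    ring

theorem alternating_sum_choose_succ_mul_cast_mul {R : Type*} [CommRing R] (g : ℕ → R) (k : ℕ) :
    ∑ j ∈ range (k + 2), ((k + 1).choose j : R) * (-1) ^ (k + 1 - j) * (j * g j) =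
      (k + 1) * ∑ i ∈ range (k + 1), (k.choose i : R) * (-1) ^ (k - i) * g (i + 1) := by
  rw [sum_range_succ', mul_sum]
  simp only [Nat.cast_zero, zero_mul, mul_zero, add_zero, Nat.add_sub_add_right]
  refine sum_congr rfl fun i _ => ?_
  have h := congrArg (Nat.cast : ℕ → R) (Nat.add_one_mul_choose_eq k i)
  push_cast at h ⊢
  linear_combination (-(-1) ^ (k - i) * g (i + 1)) * h

/-- The `k`-th forward difference at `0` of `j ↦ (mj+1)_{n,λ}`, i.e. `m ^ k k! W_{m,λ}(n,k)`. -/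
noncomputable def scaledDegWhitney (m : ℕ) (lam : ℝ) (n k : ℕ) : ℝ :=
  ∑ j ∈ range (k + 1), (k.choose j : ℝ) * (-1 : ℝ) ^ (k - j) * degFall (m * j + 1) lam n

lemma degWhitney_eq_div (m : ℕ) (lam : ℝ) (n k : ℕ) :
    degWhitney m lam n k = scaledDegWhitney m lam n k / (m ^ k * k.factorial) :=
  one_div_mul_eq_div _ _

lemma scaledDegWhitney_zero_left (m : ℕ) (lam : ℝ) (k : ℕ) :
    scaledDegWhitney m lam 0 k = 0 ^ k := by
  rw [← add_neg_cancel (1 : ℝ), add_pow]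
  simp only [scaledDegWhitney, degFall_zero, mul_comm, one_mul, one_pow]

lemma scaledDegWhitney_succ_succ (m : ℕ) (lam : ℝ) (n k : ℕ) :
    scaledDegWhitney m lam (n + 1) (k + 1) =
      (1 - n * lam) * scaledDegWhitney m lam n (k + 1) +
        m * (k + 1) * ∑ l ∈ range (n + 1),
          (n.choose l : ℝ) * scaledDegWhitney m lam l k * degFall m lam (n - l) := by
  have hV (i : ℕ) : degFall (m * (i + 1 : ℕ) + 1) lam n = ∑ l ∈ range (n + 1),
      (n.choose l : ℝ) * degFall (m * i + 1) lam l * degFall m lam (n - l) := by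
    rw [← degFall_add]
    congr 1
    push_cast
    ring
  calc scaledDegWhitney m lam (n + 1) (k + 1)
      = (1 - n * lam) * scaledDegWhitney m lam n (k + 1) +
          ∑ j ∈ range (k + 2), ((k + 1).choose j : ℝ) * (-1) ^ (k + 1 - j) *
            (j * (m * degFall (m * j + 1) lam n)) := by
        simp only [scaledDegWhitney, mul_sum, ← sum_add_distrib]
        refine sum_congr rfl fun j _ => ?_
        rw [degFall_succ]
        ring
    _ = (1 - n * lam) * scaledDegWhitney m lam n (k + 1) +
          (k + 1) * ∑ i ∈ range (k + 1), (k.choose i : ℝ) * (-1) ^ (k - i) *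
            (m * degFall (m * (i + 1 : ℕ) + 1) lam n) := by
        rw [alternating_sum_choose_succ_mul_cast_mul]
    _ = _ := by
        simp only [hV, scaledDegWhitney, mul_sum, sum_mul]
        rw [sum_comm]
        refine congrArg _ (sum_congr rfl fun l _ => sum_congr rfl fun i _ => by ring)

lemma scaledDegWhitney_eq_zero_of_lt (m : ℕ) (lam : ℝ) {n k : ℕ} (h : n < k) :
    scaledDegWhitney m lam n k = 0 := by
  induction n using Nat.strong_induction_on generalizing k with
  | _ n ih =>
  cases n with
  | zero => rw [scaledDegWhitney_zero_left, zero_pow h.ne']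
  | succ n =>
    obtain ⟨k, rfl⟩ : ∃ k', k = k' + 1 := ⟨k - 1, by omega⟩
    have hsum : ∀ l ∈ range (n + 1),
        (n.choose l : ℝ) * scaledDegWhitney m lam l k * degFall m lam (n - l) = 0 := by
      intro l hl
      rw [ih l (by simp at hl; omega) (by simp at hl; omega), mul_zero, zero_mul]
    rw [scaledDegWhitney_succ_succ, ih n (by omega) (by omega), sum_eq_zero hsum]
    ring

lemma degWhitney_eq_zero_of_lt (m : ℕ) (lam : ℝ) {n k : ℕ} (h : n < k) :
    degWhitney m lam n k = 0 := by
  rw [degWhitney_eq_div, scaledDegWhitney_eq_zero_of_lt m lam h, zero_div]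

lemma degWhitney_succ_zero (m : ℕ) (lam : ℝ) (n : ℕ) :
    degWhitney m lam (n + 1) 0 = (1 - n * lam) * degWhitney m lam n 0 := by
  simp [degWhitney_eq_div, scaledDegWhitney, degFall_succ, mul_comm]

lemma degWhitney_succ_succ {m : ℕ} (hm : (m : ℝ) ≠ 0) (lam : ℝ) (n k : ℕ) :
    degWhitney m lam (n + 1) (k + 1) =
      (1 - n * lam) * degWhitney m lam n (k + 1) +
        ∑ l ∈ range (n + 1), (n.choose l : ℝ) * degWhitney m lam l k * degFall m lam (n - l) := by
  simp only [degWhitney_eq_div, scaledDegWhitney_succ_succ, mul_div_assoc', div_mul_eq_mul_div,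
    ← sum_div, Nat.factorial_succ]
  push_cast
  field_simp
  ring

lemma degDowling_eq_sum_range_of_le (m : ℕ) (lam : ℝ) {n N : ℕ} (h : n ≤ N) (x : ℝ) :
    degDowling m lam n x = ∑ k ∈ range (N + 1), degWhitney m lam n k * x ^ k := by
  refine sum_subset (range_subset_range.2 (by omega)) fun k _ hk => ?_
  rw [degWhitney_eq_zero_of_lt m lam (by simp at hk; omega), zero_mul]

lemma degDowling_succ {m : ℕ} (hm : (m : ℝ) ≠ 0) (lam : ℝ) (n : ℕ) (x : ℝ) :
    degDowling m lam (n + 1) x =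
      (1 - n * lam) * degDowling m lam n x + x * ∑ l ∈ range (n + 1),
        (n.choose l : ℝ) * degDowling m lam l x * degFall m lam (n - l) := by
  have hconv : ∑ i ∈ range (n + 1), (∑ l ∈ range (n + 1),
      (n.choose l : ℝ) * degWhitney m lam l i * degFall m lam (n - l)) * x ^ (i + 1) =
        x * ∑ l ∈ range (n + 1),
          (n.choose l : ℝ) * degDowling m lam l x * degFall m lam (n - l) := by
    simp only [sum_mul, mul_sum]
    rw [sum_comm]
    refine sum_congr rfl fun l hl => ?_
    rw [degDowling_eq_sum_range_of_le m lam (mem_range_succ_iff.mp hl)]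
    simp only [mul_sum, sum_mul]
    exact sum_congr rfl fun i _ => by ring
  rw [degDowling, degDowling_eq_sum_range_of_le m lam (Nat.le_succ n), sum_range_succ',
    sum_range_succ' _ (n + 1)]
  simp only [degWhitney_succ_succ hm, degWhitney_succ_zero, add_mul, sum_add_distrib, hconv]
  simp only [mul_assoc, ← mul_sum]
  ring

lemma sum_choose_mul_degFall_add_one (f : ℕ → ℝ) (a lam : ℝ) (n : ℕ) :
    ∑ k ∈ range (n + 2), ((n + 1).choose k : ℝ) * f k * degFall a lam (n + 1 - k + 1) =
      a * ∑ k ∈ range (n + 2), ((n + 1).choose k : ℝ) * f k * degFall a lam (n + 1 - k) -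
        (n + 1) * lam *
          ∑ k ∈ range (n + 1), (n.choose k : ℝ) * f k * degFall a lam (n - k + 1) := by
  have hterm : ∀ k ∈ range (n + 1),
      ((n + 1).choose k : ℝ) * f k * degFall a lam (n + 1 - k + 1) =
        a * (((n + 1).choose k : ℝ) * f k * degFall a lam (n + 1 - k)) -
          (n + 1) * lam * ((n.choose k : ℝ) * f k * degFall a lam (n - k + 1)) := by
    intro k hk
    have hk : k ≤ n := mem_range_succ_iff.mp hk
    have h := congrArg (Nat.cast : ℕ → ℝ) (Nat.choose_mul_succ_eq n k)
    rw [Nat.sub_add_comm hk, degFall_succ] at *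
    push_cast [Nat.cast_sub hk] at h ⊢
    linear_combination (lam * f k * degFall a lam (n - k + 1)) * h
  rw [sum_range_succ _ (n + 1), sum_range_succ _ (n + 1), sum_congr rfl hterm, sum_sub_distrib,
    ← mul_sum, ← mul_sum]
  simp only [degFall_succ, Nat.choose_self, Nat.cast_one, one_mul, tsub_self, zero_add,
    degFall_zero, CharP.cast_eq_zero, zero_mul, sub_zero, mul_one]
  ring

lemma sum_neg_pow_mul_factorial_div_succ {K : Type*} [Field K] [CharZero K] (f : ℕ → K)
    (lam : K) (n : ℕ) :
    ∑ k ∈ range (n + 2), (-1) ^ (n + 1 - k) * lam ^ (n + 1 - k) *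
        (((n + 1).factorial : K) / k.factorial) * f k =
      f (n + 1) - (n + 1) * lam * ∑ k ∈ range (n + 1),
        (-1) ^ (n - k) * lam ^ (n - k) * ((n.factorial : K) / k.factorial) * f k := by
  have hterm : ∀ k ∈ range (n + 1),
      (-1) ^ (n + 1 - k) * lam ^ (n + 1 - k) * (((n + 1).factorial : K) / k.factorial) * f k =
        -((n + 1) * lam) *
          ((-1) ^ (n - k) * lam ^ (n - k) * ((n.factorial : K) / k.factorial) * f k) := by
    intro k hk
    rw [Nat.sub_add_comm (mem_range_succ_iff.mp hk), Nat.factorial_succ]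
    push_cast
    ring
  rw [sum_range_succ, sum_congr rfl hterm, ← mul_sum, Nat.sub_self,
    div_self (Nat.cast_ne_zero.2 (Nat.factorial_ne_zero _))]
  ring

/-- Recurrence:
`D_{m,λ}(n+1,x) = Σ_{k=0}^n (-1)^{n-k} λ^{n-k} (n!/k!) D_{m,λ}(k,x)
  + (x/m) Σ_{k=0}^n C(n,k) D_{m,λ}(k,x) (m)_{n-k+1,λ}`. -/
theorem degDowling_recurrence (m : ℕ) (hm : 0 < m) (lam : ℝ) (n : ℕ) (x : ℝ) :
    degDowling m lam (n + 1) x =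
      (∑ k ∈ Finset.range (n + 1),
          (-1 : ℝ) ^ (n - k) * lam ^ (n - k) * ((n.factorial : ℝ) / (k.factorial : ℝ)) *
            degDowling m lam k x) +
      (x / (m : ℝ)) *
        ∑ k ∈ Finset.range (n + 1),
          (n.choose k : ℝ) * degDowling m lam k x * degFall (m : ℝ) lam (n - k + 1) := by
  have hm' : (m : ℝ) ≠ 0 := by positivity
  induction n with
  | zero =>
    simp only [zero_add, degDowling_succ hm', CharP.cast_eq_zero, zero_mul, sub_zero, one_mul,
      range_one, zero_tsub, degFall_zero, mul_one, sum_singleton, Nat.choose_self, Nat.cast_one,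
      pow_zero, Nat.factorial_zero, one_div, inv_one, degFall_succ, add_right_inj]
    field_simp
  | succ n ih =>
    rw [degDowling_succ hm', sum_neg_pow_mul_factorial_div_succ, sum_choose_mul_degFall_add_one,
      mul_sub, ← mul_assoc, div_mul_cancel₀ x hm']
    push_cast
    linear_combination (-(n + 1) * lam) * ih
end
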